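/- Let a be a real number with 0 < a ≤ 1, and let γ > 0 satisfy (2+γ)·ln(2+γ) − γ·ln γ ≤ 2. Let w ∈ ℝ satisfy w·e^{w} = γ^{a}·ln γ, set c = w / ln γ and α' = a − c, and assume 0 < α' ≤ 1. Then α' + e^{−γ}·γ^{α'} / Γ(α', γ) ≤ a. -/

import Mathlib

open Real MeasureTheory

/-- The upper incomplete gamma function `Γ(a, x) = ∫ₓ^∞ e^{−u} u^{a−1} du`. -/
noncomputable def uincGamma (a x : ℝ) : ℝ :=
  ∫ u in Set.Ioi x, Real.exp (-u) * u ^ (a - 1)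

/-! With `c = w / log γ`, the equation `w e^w = γ^a log γ` says exactly that `γ^(a - c) = c`,
so `c > 0` and the claim reduces to `e^{-γ} ≤ Γ(a - c, γ)`. For `0 < α ≤ 1` the convexity
bound `u^(α-1) ≥ 1 + (α - 1) log u` gives
`Γ(α, γ) ≥ e^{-γ} + (α - 1) ∫_γ^∞ e^{-u} log u du`,
so it suffices that this last integral is nonpositive. The condition on `γ` forces
`γ ≤ 0.19`, and there the integral is bounded above using `e^{-u} ≥ 1 - u` on `(γ, 1]`
and `log u ≤ u / e` on `(1, ∞)`. -/

open Set

lemma integrableOn_exp_neg_mul_rpow_Ioi {s γ : ℝ} (hs : 0 < s) (hγ : 0 ≤ γ) :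
    IntegrableOn (fun u => exp (-u) * u ^ (s - 1)) (Ioi γ) :=
  (GammaIntegral_convergent hs).mono_set (Ioi_subset_Ioi hγ)

lemma integrableOn_exp_neg_mul_self_Ioi {γ : ℝ} (hγ : 0 ≤ γ) :
    IntegrableOn (fun u => exp (-u) * u) (Ioi γ) := by
  refine (integrableOn_exp_neg_mul_rpow_Ioi two_pos hγ).congr_fun (fun u _ => ?_) measurableSet_Ioi
  norm_num

lemma integrableOn_exp_neg_mul_log_Ioi {γ : ℝ} (hγ : 0 < γ) :
    IntegrableOn (fun u => exp (-u) * log u) (Ioi γ) := by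
  have hcont : ContinuousOn (fun u => exp (-u) * log u) (Ioi γ) :=
    (continuous_exp.comp continuous_neg).continuousOn.mul
      (continuousOn_log.mono fun u hu => (hγ.trans hu).ne')
  refine Integrable.mono' ((integrableOn_exp_neg_mul_self_Ioi hγ.le).add
    ((integrableOn_exp_neg_Ioi γ).const_mul |log γ|))
    (hcont.aestronglyMeasurable measurableSet_Ioi) ?_
  filter_upwards [ae_restrict_mem measurableSet_Ioi] with u (hu : γ < u)
  have hu0 : 0 < u := hγ.trans hu
  have hlog : |log u| ≤ u + |log γ| := abs_le.2
    ⟨by linarith [log_le_log hγ hu.le, neg_abs_le (log γ)],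
      by linarith [log_le_self hu0.le, abs_nonneg (log γ)]⟩
  rw [norm_mul, norm_of_nonneg (exp_pos _).le, norm_eq_abs, Pi.add_apply]
  nlinarith [exp_pos (-u)]

lemma integral_exp_neg_mul_self_Ioi_one : ∫ u in Ioi (1 : ℝ), exp (-u) * u = 2 * exp (-1) := by
  have hderiv : ∀ x ∈ Ici (1 : ℝ),
      HasDerivAt (fun u => -(u + 1) * exp (-u)) (exp (-x) * x) x := fun x _ => by
    have h : HasDerivAt (fun u => -(u + 1) * exp (-u)) (-1 * exp (-x) + -(x + 1) * (exp (-x) * -1))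
        x := ((hasDerivAt_id' x).add_const 1).neg.mul (hasDerivAt_neg x).exp
    exact h.congr_deriv (by ring)
  have htends : Filter.Tendsto (fun u => -(u + 1) * exp (-u)) Filter.atTop (nhds 0) := by
    have h := ((tendsto_pow_mul_exp_neg_atTop_nhds_zero 1).add tendsto_exp_neg_atTop_nhds_zero).neg
    simp only [pow_one, add_zero, neg_zero] at h
    convert h using 2 with u
    ring
  rw [integral_Ioi_of_hasDerivAt_of_tendsto' hderiv (integrableOn_exp_neg_mul_self_Ioi zero_le_one)
    htends]
  ring

lemma integral_exp_neg_mul_log_Ioi_one_le :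
    ∫ u in Ioi (1 : ℝ), exp (-u) * log u ≤ 2 * exp (-2) := by
  have hle : ∀ u ∈ Ioi (1 : ℝ), exp (-u) * log u ≤ exp (-1) * (exp (-u) * u) := by
    intro u hu
    have hu0 : (0 : ℝ) < u := zero_lt_one.trans hu
    -- `log x ≤ x - 1` at `x = u / e`
    have h := log_le_sub_one_of_pos (mul_pos hu0 (exp_pos (-1)))
    rw [log_mul hu0.ne' (exp_pos _).ne', log_exp] at h
    nlinarith [exp_pos (-u)]
  calc ∫ u in Ioi (1 : ℝ), exp (-u) * log u
      ≤ ∫ u in Ioi (1 : ℝ), exp (-1) * (exp (-u) * u) :=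
        setIntegral_mono_on (integrableOn_exp_neg_mul_log_Ioi one_pos)
          ((integrableOn_exp_neg_mul_self_Ioi zero_le_one).const_mul _) measurableSet_Ioi hle
    _ = 2 * exp (-2) := by
        rw [integral_const_mul, integral_exp_neg_mul_self_Ioi_one,
          show (-2 : ℝ) = -1 + -1 by norm_num, exp_add]
        ring

lemma integral_one_sub_mul_log {a b : ℝ} (ha : 0 < a) (hb : 0 < b) :
    ∫ u in a..b, (1 - u) * log u =
      ((b - b ^ 2 / 2) * log b - b + b ^ 2 / 4) - ((a - a ^ 2 / 2) * log a - a + a ^ 2 / 4) := by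
  have hpos : ∀ u ∈ uIcc a b, 0 < u := fun u hu => (lt_min ha hb).trans_le hu.1
  refine intervalIntegral.integral_eq_sub_of_hasDerivAt
    (f := fun x => (x - x ^ 2 / 2) * log x - x + x ^ 2 / 4) (fun u hu => ?_)
    (ContinuousOn.intervalIntegrable ?_)
  · have hu0 := (hpos u hu).ne'
    have h := ((((hasDerivAt_id' u).sub ((hasDerivAt_pow 2 u).div_const 2)).mul
      (hasDerivAt_log hu0)).sub (hasDerivAt_id' u)).add
      ((hasDerivAt_pow 2 u).div_const 4)
    refine h.congr_deriv ?_
    simp only [Pi.sub_apply]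
    field_simp
    ring
  · exact (continuousOn_const.sub continuousOn_id).mul
      (continuousOn_log.mono fun u hu => (hpos u hu).ne')

lemma integral_exp_neg_mul_log_Ioi_le_of_le {γ c : ℝ} (hγ : 0 < γ) (hγc : γ ≤ c)
    (hc : c ≤ 1) :
    ∫ u in Ioi γ, exp (-u) * log u ≤ ∫ u in Ioi c, exp (-u) * log u := by
  rw [← intervalIntegral.integral_interval_add_Ioi (integrableOn_exp_neg_mul_log_Ioi hγ)
    (integrableOn_exp_neg_mul_log_Ioi (hγ.trans_le hγc)), intervalIntegral.integral_of_le hγc]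
  have : ∫ u in Ioc γ c, exp (-u) * log u ≤ 0 := setIntegral_nonpos measurableSet_Ioc
    fun u hu => mul_nonpos_of_nonneg_of_nonpos (exp_pos _).le
      (log_nonpos (hγ.trans hu.1).le (hu.2.trans hc))
  linarith

lemma integral_exp_neg_mul_log_Ioi_le {c : ℝ} (hc0 : 0 < c) (hc1 : c ≤ 1) :
    ∫ u in Ioi c, exp (-u) * log u ≤
      -3 / 4 - ((c - c ^ 2 / 2) * log c - c + c ^ 2 / 4) + 2 * exp (-2) := by
  rw [← intervalIntegral.integral_interval_add_Ioi (integrableOn_exp_neg_mul_log_Ioi hc0)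
    (integrableOn_exp_neg_mul_log_Ioi one_pos)]
  have hle : ∫ u in c..1, exp (-u) * log u ≤ ∫ u in c..1, (1 - u) * log u := by
    refine intervalIntegral.integral_mono_on hc1
      ((intervalIntegrable_iff_integrableOn_Ioc_of_le hc1).2
        ((integrableOn_exp_neg_mul_log_Ioi hc0).mono_set Ioc_subset_Ioi_self))
      (ContinuousOn.intervalIntegrable_of_Icc hc1 ((continuousOn_const.sub continuousOn_id).mul
        (continuousOn_log.mono fun u hu => (hc0.trans_le hu.1).ne')))
      fun u hu => mul_le_mul_of_nonpos_right (by linarith [add_one_le_exp (-u)])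
        (log_nonpos (hc0.trans_le hu.1).le hu.2)
  rw [integral_one_sub_mul_log hc0 one_pos, log_one] at hle
  linarith [integral_exp_neg_mul_log_Ioi_one_le]

lemma log_nineteen_hundredths_ge : -(1 + log 2) ≤ log (19 / 100) := by
  have h : log (2 * exp 1)⁻¹ ≤ log (19 / 100) :=
    log_le_log (by positivity) <| by
      rw [inv_le_comm₀ (by positivity) (by norm_num)]
      linarith [exp_one_gt_d9]
  rw [log_inv, log_mul two_ne_zero (exp_pos 1).ne', log_exp] at h
  linarith

lemma exp_neg_two_le : exp (-2) ≤ 27 / 199 := by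
  have he : (199 / 27 : ℝ) ≤ exp 1 * exp 1 := by nlinarith [exp_one_gt_d9]
  rw [exp_neg, show (2 : ℝ) = 1 + 1 by norm_num, exp_add]
  exact inv_le_of_inv_le₀ (by norm_num) (by simpa using he)

lemma integral_exp_neg_mul_log_Ioi_nonpos {γ : ℝ} (h0 : 0 < γ) (h1 : γ ≤ 19 / 100) :
    ∫ u in Ioi γ, exp (-u) * log u ≤ 0 := by
  have hmono := integral_exp_neg_mul_log_Ioi_le_of_le h0 h1 (by norm_num)
  have hbound := integral_exp_neg_mul_log_Ioi_le (c := 19 / 100) (by norm_num) (by norm_num)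
  linarith [log_nineteen_hundredths_ge, exp_neg_two_le, log_two_lt_d9]

lemma exp_neg_add_mul_integral_log_le_uincGamma {α γ : ℝ} (hα : 0 < α) (hγ : 0 < γ) :
    exp (-γ) + (α - 1) * ∫ u in Ioi γ, exp (-u) * log u ≤ uincGamma α γ := by
  have hlog := integrableOn_exp_neg_mul_log_Ioi hγ
  rw [← integral_exp_neg_Ioi, ← integral_const_mul,
    ← integral_add (integrableOn_exp_neg_Ioi γ) (hlog.const_mul _)]
  refine setIntegral_mono_on ((integrableOn_exp_neg_Ioi γ).add (hlog.const_mul _))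
    (integrableOn_exp_neg_mul_rpow_Ioi hα hγ.le) measurableSet_Ioi fun u hu => ?_
  -- `u ^ (α - 1) = exp ((α - 1) log u) ≥ 1 + (α - 1) log u`
  have h := add_one_le_exp (log u * (α - 1))
  rw [← rpow_def_of_pos (hγ.trans hu)] at h
  nlinarith [exp_pos (-u)]

lemma exp_neg_le_uincGamma {α γ : ℝ} (hα0 : 0 < α) (hα1 : α ≤ 1) (hγ0 : 0 < γ)
    (hγ1 : γ ≤ 19 / 100) : exp (-γ) ≤ uincGamma α γ := by
  have hlower := exp_neg_add_mul_integral_log_le_uincGamma hα0 hγ0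
  have hcorr := mul_nonneg_of_nonpos_of_nonpos (sub_nonpos.2 hα1)
    (integral_exp_neg_mul_log_Ioi_nonpos hγ0 hγ1)
  linarith

lemma strictMonoOn_two_add_mul_log_sub_mul_log :
    StrictMonoOn (fun x => (2 + x) * log (2 + x) - x * log x) (Ici 0) := by
  refine strictMonoOn_of_deriv_pos (convex_Ici 0)
    ((continuous_mul_log.comp (continuous_const_add 2)).sub continuous_mul_log).continuousOn
    fun x hx => ?_
  rw [interior_Ici] at hx
  have hx0 : 0 < x := hx
  have hderiv : HasDerivAt (fun x => (2 + x) * log (2 + x) - x * log x)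
      ((log (2 + x) + 1) * 1 - (log x + 1)) x :=
    ((hasDerivAt_mul_log (by linarith : (2 + x) ≠ 0)).comp x
      ((hasDerivAt_id x).const_add 2)).sub (hasDerivAt_mul_log hx0.ne')
  rw [hderiv.deriv]
  simpa using log_lt_log hx0 (by linarith : x < 2 + x)

lemma two_lt_two_add_mul_log_sub_mul_log_nineteen_hundredths :
    2 < (2 + 19 / 100) * log (2 + 19 / 100) - 19 / 100 * log (19 / 100) := by
  have h1 : log (2 + 19 / 100) = log 2 + log (219 / 200) := by
    rw [← log_mul] <;> norm_num
  have h2 : log (19 / 100) = -(2 * log 2 + log (25 / 19)) := by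
    rw [show (19 / 100 : ℝ) = (2 * 2 * (25 / 19))⁻¹ by norm_num, log_inv,
      log_mul (by norm_num) (by norm_num), log_mul (by norm_num) (by norm_num)]
    ring
  have h3 := one_sub_inv_le_log_of_pos (show (0 : ℝ) < 219 / 200 by norm_num)
  have h4 := one_sub_inv_le_log_of_pos (show (0 : ℝ) < 25 / 19 by norm_num)
  rw [h1, h2]
  nlinarith [log_two_gt_d9]

lemma le_of_two_add_mul_log_sub_mul_log_le {γ : ℝ} (hγ : 0 < γ)
    (h : (2 + γ) * log (2 + γ) - γ * log γ ≤ 2) : γ ≤ 19 / 100 := by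
  by_contra! hlt
  have := strictMonoOn_two_add_mul_log_sub_mul_log (by norm_num : (19 / 100 : ℝ) ∈ Ici 0)
    (mem_Ici.2 hγ.le) hlt
  linarith [two_lt_two_add_mul_log_sub_mul_log_nineteen_hundredths]

lemma rpow_sub_div_log_eq {γ a w : ℝ} (hγ : 0 < γ) (hlog : log γ ≠ 0)
    (hw : w * exp w = γ ^ a * log γ) : γ ^ (a - w / log γ) = w / log γ := by
  rw [rpow_sub hγ, rpow_def_of_pos hγ (w / log γ), mul_div_cancel₀ w hlog,
    div_eq_div_iff (exp_pos w).ne' hlog, hw]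

theorem stmt_10_general (a γ w : ℝ) (hγ : 0 < γ)
    (hcond : (2 + γ) * Real.log (2 + γ) - γ * Real.log γ ≤ 2)
    (hw : w * Real.exp w = γ ^ a * Real.log γ)
    (hα'0 : 0 < a - w / Real.log γ) (hα'1 : a - w / Real.log γ ≤ 1) :
    (a - w / Real.log γ) +
        Real.exp (-γ) * γ ^ (a - w / Real.log γ) /
          uincGamma (a - w / Real.log γ) γ ≤ a := by
  have hsmall := le_of_two_add_mul_log_sub_mul_log_le hγ hcond
  have hlog : log γ ≠ 0 := (log_neg hγ (by linarith)).ne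
  have hΓ := exp_neg_le_uincGamma hα'0 hα'1 hγ hsmall
  rw [rpow_sub_div_log_eq hγ hlog hw]
  have hc : 0 < w / log γ := rpow_sub_div_log_eq hγ hlog hw ▸ rpow_pos_of_pos hγ _
  have hratio : exp (-γ) * (w / log γ) / uincGamma (a - w / log γ) γ ≤ w / log γ := by
    rw [div_le_iff₀ ((exp_pos _).trans_le hΓ), mul_comm]
    exact mul_le_mul_of_nonneg_left hΓ hc.le
  linarith

/-- The inequality `J(α'(γ), γ) ≤ α*` of the paper's Lemma 14: with `0 < a ≤ 1`,
`γ > 0` satisfying `(2+γ)·ln(2+γ) − γ·ln γ ≤ 2`, `w` satisfying `w·e^w = γ^a·ln γ`,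
`c = w / ln γ`, `α' = a − c` and `0 < α' ≤ 1`, one has
`α' + e^{−γ}·γ^{α'}/Γ(α', γ) ≤ a`. -/
theorem stmt_10 (a γ w : ℝ) (ha0 : 0 < a) (ha1 : a ≤ 1) (hγ : 0 < γ)
    (hcond : (2 + γ) * Real.log (2 + γ) - γ * Real.log γ ≤ 2)
    (hw : w * Real.exp w = γ ^ a * Real.log γ)
    (hα'0 : 0 < a - w / Real.log γ) (hα'1 : a - w / Real.log γ ≤ 1) :
    (a - w / Real.log γ) +
        Real.exp (-γ) * γ ^ (a - w / Real.log γ) /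
          uincGamma (a - w / Real.log γ) γ ≤ a :=
  stmt_10_general a γ w hγ hcond hw hα'0 hα'1
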